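/- The projection endomorphism ϱ of O^{>0,n}_∞ defined by ϱ(φ) = Σ_{k>0} (1/k) ρ∘h_k∘h^n(φ) with ρ(φ) = Σ_{|Λ|≥0} (−1)^{|Λ|} θ^i ∧ d_Λ(∂^Λ_i ⌟ φ) annihilates total differentials: ϱ ∘ d_H = 0 on contact forms of horizontal degree n−1. -/

import Mathlib

/-!
A concrete polynomial model of the infinite jet space `J^∞Y` of a fiber bundle `Y → X`
(`dim X = n`, fiber coordinates indexed by `ι`): the ring `O⁰_∞` of functions of finite
jet order is modeled by polynomials in the coordinates `x^λ` and the jet coordinates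
`y^i_Λ` (`Λ` a symmetric multi-index, i.e. `Λ : Fin n →₀ ℕ`).
-/

open MvPolynomial

/-- Jet variables: the base coordinates `x^λ` and the jet coordinates `y^i_Λ`. -/
abbrev JetVar (n : ℕ) (ι : Type) : Type := Sum (Fin n) (ι × (Fin n →₀ ℕ))

/-- The ring `O⁰_∞` of functions of finite jet order (polynomial model). -/
abbrev JetAlg (n : ℕ) (ι : Type) : Type := MvPolynomial (JetVar n ι) ℝ

/-- The jet coordinate `y^i_Λ` as an element of `O⁰_∞`. -/
noncomputable def yco (n : ℕ) (ι : Type) (i : ι) (Λ : Fin n →₀ ℕ) : JetAlg n ι :=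
  X (Sum.inr (i, Λ))

/-- The total derivative `d_λ = ∂_λ + Σ_Λ y^i_{λ+Λ} ∂^Λ_i`. -/
noncomputable def dTot (n : ℕ) (ι : Type) (lam : Fin n) :
    Derivation ℝ (JetAlg n ι) (JetAlg n ι) :=
  mkDerivation ℝ fun v => match v with
    | Sum.inl mu => if mu = lam then 1 else 0
    | Sum.inr (i, Λ) => yco n ι i (Λ + Finsupp.single lam 1)

/-- The iterated total derivative `d_Λ = d_{λ_k} ∘ ⋯ ∘ d_{λ_1}`. -/
noncomputable def dMulti (n : ℕ) (ι : Type) (Λ : Fin n →₀ ℕ) :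
    JetAlg n ι →ₗ[ℝ] JetAlg n ι :=
  ((Finsupp.toMultiset Λ).toList.map fun lam => (dTot n ι lam).toLinearMap).foldr
    (· ∘ₗ ·) LinearMap.id

/-- One-forms of finite jet order: formal combinations `Σ φ_v d(v)` over the jet variables. -/
abbrev Forms1 (n : ℕ) (ι : Type) : Type := JetVar n ι →₀ JetAlg n ι

/-- The differential `d : O⁰_∞ → O¹_∞`. -/
noncomputable def dP (n : ℕ) (ι : Type) : Derivation ℝ (JetAlg n ι) (Forms1 n ι) :=
  mkDerivation ℝ fun v => Finsupp.single v 1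

/-- The contact one-form `θ^i_Λ = dy^i_Λ − y^i_{λ+Λ} dx^λ`. -/
noncomputable def theta (n : ℕ) (ι : Type) (i : ι) (Λ : Fin n →₀ ℕ) : Forms1 n ι :=
  Finsupp.single (Sum.inr (i, Λ)) 1 -
    ∑ lam : Fin n, Finsupp.single (Sum.inl lam) (yco n ι i (Λ + Finsupp.single lam 1))

/-- The `O⁰_∞`-module of contact one-forms, spanned by the `θ^i_Λ`. -/
noncomputable def contact (n : ℕ) (ι : Type) : Submodule (JetAlg n ι) (Forms1 n ι) :=
  Submodule.span _ (Set.range fun p : ι × (Fin n →₀ ℕ) => theta n ι p.1 p.2)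

/-- The derivation `υ = υ^λ ∂_λ + υ^i ∂_i + Σ_{|Λ|>0} υ^i_Λ ∂^Λ_i` of `O⁰_∞` with
prescribed coefficients `υ^λ = vX λ` and `υ^i_Λ = vY i Λ` (`υ^i = vY i 0`). -/
noncomputable def genDer (n : ℕ) (ι : Type) (vX : Fin n → JetAlg n ι)
    (vY : ι → (Fin n →₀ ℕ) → JetAlg n ι) : Derivation ℝ (JetAlg n ι) (JetAlg n ι) :=
  mkDerivation ℝ fun v => match v with
    | Sum.inl lam => vX lam
    | Sum.inr (i, Λ) => vY i Λ

/-- The Lie derivative of a one-form along a derivation `υ` of `O⁰_∞`: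
`L_υ(Σ a_v dv) = Σ υ(a_v) dv + a_v d(υ(v))`. -/
noncomputable def lieD (n : ℕ) (ι : Type)
    (υ : Derivation ℝ (JetAlg n ι) (JetAlg n ι)) (φ : Forms1 n ι) : Forms1 n ι :=
  φ.sum fun v a => Finsupp.single v (υ a) + a • (dP n ι (υ (X v)))

/-- One-contact `n`-horizontal forms `Σ φ_a^Λ θ^a_Λ ∧ ω` (coefficients of `θ^a_Λ ∧ ω`). -/
abbrev FormsCn (n : ℕ) (ι : Type) : Type := (ι × (Fin n →₀ ℕ)) →₀ JetAlg n ι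

/-- One-contact `(n−1)`-horizontal forms `Σ φ θ^a_Λ ∧ ω_μ` (coefficients of `θ^a_Λ ∧ ω_μ`). -/
abbrev FormsCn1 (n : ℕ) (ι : Type) : Type := (ι × (Fin n →₀ ℕ) × Fin n) →₀ JetAlg n ι

/-- The total differential `d_H φ = dx^λ ∧ d_λ φ` on one-contact `(n−1)`-horizontal forms:
`d_H(a θ^i_Λ ∧ ω_μ) = −a θ^i_{μ+Λ} ∧ ω − (d_μ a) θ^i_Λ ∧ ω`. -/
noncomputable def dHCn1 (n : ℕ) (ι : Type) (φ : FormsCn1 n ι) : FormsCn n ι :=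
  φ.sum fun v a =>
    -(Finsupp.single (v.1, v.2.1 + Finsupp.single v.2.2 1) a)
      - Finsupp.single (v.1, v.2.1) (dTot n ι v.2.2 a)

/-- The projection endomorphism `ϱ` of `O^{1,n}_∞`:
`ϱ(Σ a θ^i_Λ ∧ ω) = Σ (−1)^{|Λ|} θ^i ∧ d_Λ(a) ω`. -/
noncomputable def varrho (n : ℕ) (ι : Type) (φ : FormsCn n ι) : FormsCn n ι :=
  φ.sum fun v a =>
    Finsupp.single (v.1, (0 : Fin n →₀ ℕ))
      (((-1 : ℝ) ^ (v.2.sum fun _ k => k)) • dMulti n ι v.2 a)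

/-!
Writing `ψ = a θ^i_Λ ∧ ω_μ`, we get `d_H ψ = −a θ^i_{Λ+μ} ∧ ω − (d_μ a) θ^i_Λ ∧ ω`, and `ϱ` sends
the two terms to `θ^i ∧ ω` times `(−1)^{|Λ|} d_{Λ+μ} a` and `−(−1)^{|Λ|} d_Λ d_μ a`. These cancel
because total derivatives commute, so that `d_{Λ+μ} = d_Λ ∘ d_μ`.
-/

section

variable {n : ℕ} {ι : Type}

theorem dTot_dTot_comm (lam mu : Fin n) (p : JetAlg n ι) :
    dTot n ι lam (dTot n ι mu p) = dTot n ι mu (dTot n ι lam p) := by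
  have hbracket : ⁅dTot n ι lam, dTot n ι mu⁆ = 0 := by
    refine MvPolynomial.derivation_ext fun v => ?_
    rw [Derivation.commutator_apply, Derivation.zero_apply, sub_eq_zero]
    match v with
    | Sum.inl nu =>
        simp only [dTot, mkDerivation_X]
        split <;> split <;> simp
    | Sum.inr (i, Λ) =>
        simp only [dTot, mkDerivation_X, yco]
        rw [add_right_comm]
  simpa [Derivation.commutator_apply, sub_eq_zero] using congr($hbracket p)

theorem dTot_commute (lam mu : Fin n) :
    Commute (dTot n ι lam).toLinearMap (dTot n ι mu).toLinearMap :=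
  LinearMap.ext (dTot_dTot_comm lam mu)

theorem dMulti_eq_prod (Λ : Fin n →₀ ℕ) :
    dMulti n ι Λ = ((Finsupp.toMultiset Λ).toList.map fun lam => (dTot n ι lam).toLinearMap).prod :=
  rfl

theorem dMulti_add (Λ Λ' : Fin n →₀ ℕ) :
    dMulti n ι (Λ + Λ') = dMulti n ι Λ ∘ₗ dMulti n ι Λ' := by
  have hperm : (Finsupp.toMultiset (Λ + Λ')).toList.Perm
      ((Finsupp.toMultiset Λ).toList ++ (Finsupp.toMultiset Λ').toList) := by
    rw [← Multiset.coe_eq_coe, ← Multiset.coe_add]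
    simp [Finsupp.toMultiset_add]
  have hcomm : ((Finsupp.toMultiset (Λ + Λ')).toList.map
      fun lam => (dTot n ι lam).toLinearMap).Pairwise Commute :=
    List.pairwise_map.mpr <| List.pairwise_of_forall dTot_commute
  rw [dMulti_eq_prod, (hperm.map _).prod_eq' hcomm, List.map_append, List.prod_append]
  rfl

theorem dMulti_single_one (mu : Fin n) :
    dMulti n ι (Finsupp.single mu 1) = (dTot n ι mu).toLinearMap := by
  simp [dMulti_eq_prod, Finsupp.toMultiset_single]

theorem dMulti_add_single_one (Λ : Fin n →₀ ℕ) (mu : Fin n) (a : JetAlg n ι) :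
    dMulti n ι (Λ + Finsupp.single mu 1) a = dMulti n ι Λ (dTot n ι mu a) := by
  rw [dMulti_add, dMulti_single_one]
  rfl

theorem varrho_add (φ₁ φ₂ : FormsCn n ι) :
    varrho n ι (φ₁ + φ₂) = varrho n ι φ₁ + varrho n ι φ₂ :=
  Finsupp.sum_add_index' (fun _ => by simp) fun _ _ _ => by simp [smul_add, Finsupp.single_add]

theorem varrho_neg (φ : FormsCn n ι) : varrho n ι (-φ) = -varrho n ι φ :=
  map_neg (AddMonoidHom.mk' (varrho n ι) varrho_add) φ

theorem varrho_sub (φ₁ φ₂ : FormsCn n ι) :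
    varrho n ι (φ₁ - φ₂) = varrho n ι φ₁ - varrho n ι φ₂ :=
  map_sub (AddMonoidHom.mk' (varrho n ι) varrho_add) φ₁ φ₂

theorem varrho_single (i : ι) (Λ : Fin n →₀ ℕ) (a : JetAlg n ι) :
    varrho n ι (Finsupp.single (i, Λ) a) =
      Finsupp.single (i, 0) (((-1 : ℝ) ^ (Λ.sum fun _ k => k)) • dMulti n ι Λ a) :=
  Finsupp.sum_single_index (by simp)

theorem dHCn1_add (φ₁ φ₂ : FormsCn1 n ι) :
    dHCn1 n ι (φ₁ + φ₂) = dHCn1 n ι φ₁ + dHCn1 n ι φ₂ :=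
  Finsupp.sum_add_index' (fun _ => by simp) fun _ _ _ => by
    simp only [map_add, Finsupp.single_add]
    abel

theorem dHCn1_single (v : ι × (Fin n →₀ ℕ) × Fin n) (a : JetAlg n ι) :
    dHCn1 n ι (Finsupp.single v a) =
      -Finsupp.single (v.1, v.2.1 + Finsupp.single v.2.2 1) a
        - Finsupp.single (v.1, v.2.1) (dTot n ι v.2.2 a) :=
  Finsupp.sum_single_index (by simp)

theorem varrho_dHCn1_single (v : ι × (Fin n →₀ ℕ) × Fin n) (a : JetAlg n ι) :
    varrho n ι (dHCn1 n ι (Finsupp.single v a)) = 0 := by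
  obtain ⟨i, Λ, mu⟩ := v
  have horder : ((Λ + Finsupp.single mu 1).sum fun _ k => k) = (Λ.sum fun _ k => k) + 1 := by
    rw [Finsupp.sum_add_index' (fun _ => rfl) (fun _ _ _ => rfl), Finsupp.sum_single_index rfl]
  rw [dHCn1_single, varrho_sub, varrho_neg]
  simp only [varrho_single, dMulti_add_single_one, horder,
    pow_succ, mul_neg_one, neg_smul, Finsupp.single_neg, neg_neg, sub_self]

end

theorem stmt_4 (n : ℕ) (ι : Type) (ψ : FormsCn1 n ι) :
    varrho n ι (dHCn1 n ι ψ) = 0 := by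
  induction ψ using Finsupp.induction_linear with
  | zero => simp [dHCn1, varrho]
  | add ψ₁ ψ₂ h₁ h₂ => rw [dHCn1_add, varrho_add, h₁, h₂, add_zero]
  | single v a => exact varrho_dHCn1_single v a
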